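/- Let a be a real number and define the operator X on Schwartz functions f : ℝ → ℂ by (X f)(q) = −i*a*( q * f'(q) + f(q)/2 ). Then X is symmetric with respect to the L² inner product: for all Schwartz functions f, g : ℝ → ℂ, ∫ conj((X f)(q)) * g(q) dq = ∫ conj(f(q)) * (X g)(q) dq. -/

import Mathlib

/-!
Writing `Q` for multiplication by `q` and `P = -i d/dq`, one has `X = (a/2)(QP + PQ)` on Schwartz
space. `Q` is symmetric pointwise and `P` is symmetric by integration by parts (Schwartz functions
leave no boundary terms); the anticommutator of two symmetric operators is symmetric, and so is
any real multiple of it.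
-/

/-- The represented coordinate operator `X = (a/2)(QP + PQ)`:
`(X f)(q) = -i*a*(q * f'(q) + f(q)/2)`. -/
noncomputable def Xop (a : ℝ) (f : ℝ → ℂ) : ℝ → ℂ :=
  fun q => -Complex.I * (a : ℂ) * ((q : ℂ) * deriv f q + f q / 2)

open MeasureTheory SchwartzMap Complex
open scoped InnerProductSpace ComplexConjugate

section Symmetric

variable {𝕜 M H : Type*} [RCLike 𝕜] [AddCommGroup M] [Module 𝕜 M]
  [NormedAddCommGroup H] [InnerProductSpace 𝕜 H]

def LinearMap.IsSymmetricAlong (T : M →ₗ[𝕜] M) (ι : M →ₗ[𝕜] H) : Prop :=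
  ∀ x y, ⟪ι (T x), ι y⟫_𝕜 = ⟪ι x, ι (T y)⟫_𝕜

namespace LinearMap.IsSymmetricAlong

variable {ι : M →ₗ[𝕜] H} {A B : M →ₗ[𝕜] M}

theorem ofReal_smul (hA : A.IsSymmetricAlong ι) (r : ℝ) :
    ((r : 𝕜) • A).IsSymmetricAlong ι := fun x y => by
  simp only [smul_apply, map_smul, inner_smul_left, inner_smul_right, RCLike.conj_ofReal, hA x y]

theorem inner_comp_eq (hA : A.IsSymmetricAlong ι) (hB : B.IsSymmetricAlong ι) (x y : M) :
    ⟪ι ((A ∘ₗ B) x), ι y⟫_𝕜 = ⟪ι x, ι ((B ∘ₗ A) y)⟫_𝕜 := by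
  rw [comp_apply, hA, hB, comp_apply]

theorem anticommutator (hA : A.IsSymmetricAlong ι) (hB : B.IsSymmetricAlong ι) :
    (A ∘ₗ B + B ∘ₗ A).IsSymmetricAlong ι := fun x y => by
  rw [add_apply, add_apply, map_add, map_add, inner_add_left, inner_add_right,
    inner_comp_eq hA hB, inner_comp_eq hB hA, add_comm]

end LinearMap.IsSymmetricAlong

end Symmetric

namespace SchwartzMap

noncomputable def positionCLM : 𝓢(ℝ, ℂ) →L[ℂ] 𝓢(ℝ, ℂ) := smulLeftCLM ℂ (fun x : ℝ => (x : ℂ))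

noncomputable def momentumCLM : 𝓢(ℝ, ℂ) →L[ℂ] 𝓢(ℝ, ℂ) := -I • derivCLM ℂ ℂ

theorem positionCLM_apply (f : 𝓢(ℝ, ℂ)) (x : ℝ) : positionCLM f x = x * f x :=
  smulLeftCLM_apply_apply (by fun_prop) f x

theorem momentumCLM_apply (f : 𝓢(ℝ, ℂ)) (x : ℝ) : momentumCLM f x = -I * deriv f x := rfl

theorem deriv_positionCLM (f : 𝓢(ℝ, ℂ)) (x : ℝ) :
    deriv (positionCLM f) x = f x + x * deriv f x := by
  rw [show ⇑(positionCLM f) = fun y : ℝ => (y : ℂ) * f y from funext (positionCLM_apply f)]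
  exact ((hasDerivAt_id (x : ℂ)).comp_ofReal.mul (f.hasDerivAt x)).deriv.trans (by simp)

theorem integral_conj_mul_eq_inner (f g : 𝓢(ℝ, ℂ)) :
    ∫ x, conj (f x) * g x = ⟪f.toLp 2, g.toLp 2⟫_ℂ := by
  simp [inner_toL2_toL2_eq, mul_comm]

theorem integral_conj_deriv_mul (f g : 𝓢(ℝ, ℂ)) :
    ∫ x, conj (deriv f x) * g x = -∫ x, conj (f x) * deriv g x := by
  have := integral_bilinear_deriv_right_eq_neg_left f g
    ((ContinuousLinearMap.mul ℝ ℂ).comp conjCLE.toContinuousLinearMap)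
  simpa using neg_eq_iff_eq_neg.mp this.symm

theorem isSymmetricAlong_positionCLM :
    positionCLM.toLinearMap.IsSymmetricAlong
      (toLpCLM ℂ ℂ 2 (volume : Measure ℝ)).toLinearMap := fun f g => by
  simp only [ContinuousLinearMap.coe_coe, toLpCLM_apply, ← integral_conj_mul_eq_inner,
    positionCLM_apply, map_mul, conj_ofReal]
  congr 1; ext x; ring

theorem isSymmetricAlong_momentumCLM :
    momentumCLM.toLinearMap.IsSymmetricAlong
      (toLpCLM ℂ ℂ 2 (volume : Measure ℝ)).toLinearMap := fun f g => by
  simp only [ContinuousLinearMap.coe_coe, toLpCLM_apply, ← integral_conj_mul_eq_inner,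
    momentumCLM_apply, map_mul, map_neg, conj_I, neg_neg, mul_assoc, integral_const_mul,
    integral_conj_deriv_mul, mul_left_comm (conj (f _))]
  ring

noncomputable def coordinateOp (a : ℝ) : 𝓢(ℝ, ℂ) →ₗ[ℂ] 𝓢(ℝ, ℂ) :=
  ((a / 2 : ℝ) : ℂ) • (positionCLM.toLinearMap ∘ₗ momentumCLM.toLinearMap +
    momentumCLM.toLinearMap ∘ₗ positionCLM.toLinearMap)

theorem coordinateOp_apply (a : ℝ) (f : 𝓢(ℝ, ℂ)) : ⇑(coordinateOp a f) = Xop a f := by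
  ext q
  simp only [coordinateOp, LinearMap.smul_apply, LinearMap.add_apply, LinearMap.comp_apply,
    ContinuousLinearMap.coe_coe, smul_apply, add_apply, positionCLM_apply, momentumCLM_apply,
    deriv_positionCLM, smul_eq_mul, Xop]
  push_cast
  ring

theorem isSymmetricAlong_coordinateOp (a : ℝ) :
    (coordinateOp a).IsSymmetricAlong (toLpCLM ℂ ℂ 2 (volume : Measure ℝ)).toLinearMap :=
  (isSymmetricAlong_positionCLM.anticommutator isSymmetricAlong_momentumCLM).ofReal_smul _

end SchwartzMap

theorem Xop_symmetric (a : ℝ) (f g : SchwartzMap ℝ ℂ) :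
    ∫ q : ℝ, (starRingEnd ℂ) (Xop a ⇑f q) * g q =
      ∫ q : ℝ, (starRingEnd ℂ) (f q) * Xop a ⇑g q := by
  rw [← coordinateOp_apply, ← coordinateOp_apply, integral_conj_mul_eq_inner,
    integral_conj_mul_eq_inner]
  exact isSymmetricAlong_coordinateOp a f g
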